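/- Let k > 0, H ∈ ℝ, and let ĝ : ℝ → ℂ be a Schwartz function. Define u(x₁, x₂) = (1/(2π)) ∫_ℝ e^{iξx₁ + iβ(ξ)(x₂ − H)} ĝ(ξ) dξ for x₂ ≥ H. Then for every x₁ ∈ ℝ the one-sided partial derivative of u with respect to x₂ at the boundary point (x₁, H), taken from within {x₂ ≥ H}, exists and equals (i/(2π)) ∫_ℝ β(ξ) ĝ(ξ) e^{iξx₁} dξ. In other words, the upward propagating radiation condition implies the Dirichlet-to-Neumann boundary condition ∂u/∂x₂(·, H) = T⁺[u(·, H)], where T⁺ acts on a function whose Fourier data is ĝ by (T⁺φ)(x₁) = (i/(2π)) ∫_ℝ β(ξ) ĝ(ξ) e^{iξx₁} dξ. -/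

import Mathlib

open Complex MeasureTheory

/-- The square-root symbol `β(ξ) = √(k² - ξ²)` for `|ξ| ≤ k` and `i√(ξ² - k²)` for `|ξ| > k`. -/
noncomputable def betaSym (k ξ : ℝ) : ℂ :=
  if |ξ| ≤ k then ((Real.sqrt (k ^ 2 - ξ ^ 2) : ℝ) : ℂ)
  else Complex.I * ((Real.sqrt (ξ ^ 2 - k ^ 2) : ℝ) : ℂ)

/-- The upward propagating field
`u(x₁, x₂) = (1/(2π)) ∫_ℝ e^{iξx₁ + iβ(ξ)(x₂ - H)} ĝ(ξ) dξ`. -/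
noncomputable def uRad (k H : ℝ) (g : SchwartzMap ℝ ℂ) (p : ℝ × ℝ) : ℂ :=
  (1 / (2 * (Real.pi : ℂ))) *
    ∫ ξ : ℝ, Complex.exp (Complex.I * ξ * p.1 + Complex.I * betaSym k ξ * (p.2 - H)) * g ξ

open Filter
lemma betaSym_measurable (k : ℝ) : Measurable (betaSym k) := by
  unfold betaSym
  refine Measurable.ite ?_ ?_ ?_
  · exact measurableSet_le (measurable_abs) measurable_const
  · exact Complex.measurable_ofReal.comp
      (Real.continuous_sqrt.measurable.comp ((measurable_const.sub ((measurable_id.pow_const 2)))))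
  · exact (Complex.measurable_ofReal.comp
      (Real.continuous_sqrt.measurable.comp (((measurable_id.pow_const 2).sub measurable_const)))).const_mul _

lemma re_I_mul_betaSym (k ξ : ℝ) : (Complex.I * betaSym k ξ).re ≤ 0 := by
  unfold betaSym
  split
  · simp
  · have : Complex.I * (Complex.I * ((Real.sqrt (ξ ^ 2 - k ^ 2) : ℝ) : ℂ))
        = -((Real.sqrt (ξ ^ 2 - k ^ 2) : ℝ) : ℂ) := by
      rw [← mul_assoc, Complex.I_mul_I]; ring
    rw [this]
    simp [Real.sqrt_nonneg]

lemma norm_betaSym_le (k ξ : ℝ) (hk : 0 ≤ k) : ‖betaSym k ξ‖ ≤ k + |ξ| := by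
  unfold betaSym
  split
  · calc ‖((Real.sqrt (k ^ 2 - ξ ^ 2) : ℝ) : ℂ)‖ = Real.sqrt (k ^ 2 - ξ ^ 2) := by
          simp [Complex.norm_real, Real.norm_eq_abs, _root_.abs_of_nonneg, Real.sqrt_nonneg]
      _ ≤ Real.sqrt (k ^ 2) := Real.sqrt_le_sqrt (by nlinarith [sq_nonneg ξ])
      _ = k := by rw [Real.sqrt_sq hk]
      _ ≤ k + |ξ| := by linarith [abs_nonneg ξ]
  · calc ‖Complex.I * ((Real.sqrt (ξ ^ 2 - k ^ 2) : ℝ) : ℂ)‖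
        = Real.sqrt (ξ ^ 2 - k ^ 2) := by
          simp [Complex.norm_real, Real.norm_eq_abs, _root_.abs_of_nonneg, Real.sqrt_nonneg]
      _ ≤ Real.sqrt (ξ ^ 2) := Real.sqrt_le_sqrt (by nlinarith [sq_nonneg k])
      _ = |ξ| := Real.sqrt_sq_eq_abs ξ
      _ ≤ k + |ξ| := by linarith

lemma norm_exp_mul_sub_one_le {z : ℂ} (hz : z.re ≤ 0) {s : ℝ} (hs : 0 ≤ s) :
    ‖Complex.exp (z * s) - 1‖ ≤ ‖z‖ * s := by
  have hder : ∀ u ∈ Set.Icc (0:ℝ) s,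
      HasDerivWithinAt (fun u : ℝ => Complex.exp (z * u))
        (Complex.exp (z * u) * z) (Set.Icc 0 s) u := by
    intro u _
    have h1 : HasDerivAt (fun u : ℝ => z * (u : ℂ)) z u := by
      simpa using (Complex.ofRealCLM.hasDerivAt (x := u)).const_mul z
    exact (h1.cexp).hasDerivWithinAt
  have hbound : ∀ u ∈ Set.Ico (0:ℝ) s, ‖Complex.exp (z * u) * z‖ ≤ ‖z‖ := by
    intro u hu
    rw [norm_mul]
    have : ‖Complex.exp (z * u)‖ ≤ 1 := by
      rw [Complex.norm_exp]
      refine Real.exp_le_one_iff.2 ?_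
      have : (z * (u : ℂ)).re = z.re * u := by simp [Complex.mul_re]
      rw [this]
      exact mul_nonpos_of_nonpos_of_nonneg hz hu.1
    nlinarith [norm_nonneg z]
  have := norm_image_sub_le_of_norm_deriv_le_segment' hder hbound s
    (Set.right_mem_Icc.2 hs)
  simpa using this

/-- The upward propagating radiation condition implies the Dirichlet-to-Neumann boundary
condition: the one-sided derivative of `u` in `x₂` at the boundary `x₂ = H`, taken from
within `{x₂ ≥ H}`, exists and equals `(i/(2π)) ∫_ℝ β(ξ) ĝ(ξ) e^{iξx₁} dξ`. -/
theorem uRad_dtn_boundary (k H : ℝ) (hk : 0 < k) (g : SchwartzMap ℝ ℂ) (x₁ : ℝ) :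
    HasDerivWithinAt (fun t : ℝ => uRad k H g (x₁, t))
      ((Complex.I / (2 * (Real.pi : ℂ))) *
        ∫ ξ : ℝ, betaSym k ξ * g ξ * Complex.exp (Complex.I * ξ * x₁))
      (Set.Ici H) H := by
  set z : ℝ → ℂ := fun ξ => Complex.I * betaSym k ξ with hzdef
  set A : ℝ → ℂ := fun ξ => Complex.I * ξ * x₁ with hAdef
  have hAre : ∀ ξ, (A ξ).re = 0 := by
    intro ξ; simp [hAdef, Complex.mul_re]
  set f : ℝ → ℝ → ℂ := fun t ξ => Complex.exp (A ξ + z ξ * ((t : ℂ) - H)) * g ξ with hfdef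
  have hmeas : ∀ t : ℝ, AEStronglyMeasurable (f t) volume := by
    intro t
    refine (Measurable.aestronglyMeasurable ?_)
    apply Measurable.mul
    · exact Complex.measurable_exp.comp
        ((Complex.measurable_ofReal.const_mul Complex.I |>.mul measurable_const).add
          (((betaSym_measurable k).const_mul Complex.I).mul measurable_const))
    · exact g.continuous.measurable
  have hf_int : ∀ t ≥ H, Integrable (f t) volume := by
    intro t ht
    refine Integrable.mono' (g.integrable.norm) (hmeas t) ?_
    refine Filter.Eventually.of_forall fun ξ => ?_
    rw [hfdef]
    simp only [norm_mul]
    have h1 : ‖Complex.exp (A ξ + z ξ * ((t : ℂ) - H))‖ ≤ 1 := by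
      rw [Complex.norm_exp]
      refine Real.exp_le_one_iff.2 ?_
      have : ((t : ℂ) - H) = ((t - H : ℝ) : ℂ) := by push_cast; ring
      rw [Complex.add_re, hAre, this]
      have : (z ξ * ((t - H : ℝ) : ℂ)).re = (z ξ).re * (t - H) := by simp [Complex.mul_re]
      rw [this]
      have := re_I_mul_betaSym k ξ
      nlinarith
    nlinarith [norm_nonneg (g ξ), norm_nonneg (Complex.exp (A ξ + z ξ * ((t : ℂ) - H)))]
  set G : ℝ → ℝ → ℂ := fun t ξ => (t - H)⁻¹ • (f t ξ - f H ξ) with hGdef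
  set D : ℂ := ∫ ξ : ℝ, z ξ * Complex.exp (A ξ) * g ξ with hDdef
  have hbound_int : Integrable (fun ξ : ℝ => (k + |ξ|) * ‖g ξ‖) volume := by
    have h1 : Integrable (fun ξ : ℝ => k * ‖g ξ‖) volume := g.integrable.norm.const_mul k
    have h2 : Integrable (fun ξ : ℝ => ‖ξ‖ ^ 1 * ‖g ξ‖) volume := g.integrable_pow_mul volume 1
    have := h1.add (by simpa using h2)
    refine this.congr (Filter.Eventually.of_forall fun ξ => ?_)
    simp [Real.norm_eq_abs]; ring
  have hDCT : Tendsto (fun t => ∫ ξ : ℝ, G t ξ) (nhdsWithin H (Set.Ioi H)) (nhds D) := by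
    refine tendsto_integral_filter_of_dominated_convergence
      (fun ξ => (k + |ξ|) * ‖g ξ‖) ?_ ?_ hbound_int ?_
    · refine Filter.Eventually.of_forall fun t => ?_
      exact ((hmeas t).sub (hmeas H)).const_smul ((t - H)⁻¹ : ℝ)
    · filter_upwards [self_mem_nhdsWithin] with t ht
      refine Filter.Eventually.of_forall fun ξ => ?_
      have hs : (0:ℝ) < t - H := sub_pos.2 ht
      have hsplit : f t ξ - f H ξ = Complex.exp (A ξ) * (Complex.exp (z ξ * ((t - H : ℝ) : ℂ)) - 1) * g ξ := by
        simp only [hfdef]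
        have h0 : A ξ + z ξ * ((H : ℂ) - H) = A ξ := by ring
        have h1 : A ξ + z ξ * ((t : ℂ) - H) = A ξ + z ξ * ((t - H : ℝ) : ℂ) := by push_cast; ring
        rw [h0, h1, Complex.exp_add]
        ring
      rw [hGdef]
      simp only [norm_smul, hsplit, norm_mul, norm_inv, Real.norm_eq_abs]
      have hexpA : ‖Complex.exp (A ξ)‖ = 1 := by
        rw [Complex.norm_exp, hAre, Real.exp_zero]
      have hzre : (z ξ).re ≤ 0 := re_I_mul_betaSym k ξ
      have hkey : ‖Complex.exp (z ξ * ((t - H : ℝ) : ℂ)) - 1‖ ≤ ‖z ξ‖ * (t - H) :=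
        norm_exp_mul_sub_one_le hzre hs.le
      have hznorm : ‖z ξ‖ ≤ k + |ξ| := by
        rw [hzdef]
        simpa using norm_betaSym_le k ξ hk.le
      rw [hexpA, abs_of_pos hs]
      calc (t - H)⁻¹ * (1 * ‖Complex.exp (z ξ * ((t - H : ℝ) : ℂ)) - 1‖ * ‖g ξ‖)
          ≤ (t - H)⁻¹ * (1 * (‖z ξ‖ * (t - H)) * ‖g ξ‖) := by
            have hn : (0:ℝ) ≤ (t - H)⁻¹ := by positivity
            gcongr
        _ = ‖z ξ‖ * ‖g ξ‖ := by field_simp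
        _ ≤ (k + |ξ|) * ‖g ξ‖ := by
            have := norm_nonneg (g ξ); nlinarith
    · refine Filter.Eventually.of_forall fun ξ => ?_
      have hder : HasDerivAt (fun t : ℝ => f t ξ) (z ξ * Complex.exp (A ξ) * g ξ) H := by
        have h1 : HasDerivAt (fun t : ℝ => A ξ + z ξ * ((t : ℂ) - H)) (z ξ) H := by
          have h0 : HasDerivAt (fun t : ℝ => ((t : ℝ) : ℂ)) 1 H := Complex.ofRealCLM.hasDerivAt
          have := ((h0.sub_const (H : ℂ)).const_mul (z ξ)).const_add (A ξ)
          simpa using this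
        have h2 := h1.cexp
        have h3 := h2.mul_const (g ξ : ℂ)
        have h4 : A ξ + z ξ * ((H : ℂ) - H) = A ξ := by ring
        simpa [hfdef, h4, mul_comm, mul_assoc, mul_left_comm] using h3
      have := hasDerivAt_iff_tendsto_slope.1 hder
      refine (this.mono_left (nhdsWithin_mono H ?_)).congr (fun t => ?_)
      · intro t ht; exact ne_of_gt ht
      · simp [slope_fun_def, hGdef]
  have hslope_eq : ∀ᶠ t in nhdsWithin H (Set.Ioi H),
      slope (fun t => ∫ ξ : ℝ, f t ξ) H t = ∫ ξ : ℝ, G t ξ := by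
    filter_upwards [self_mem_nhdsWithin] with t ht
    have h1 : (∫ ξ : ℝ, f t ξ) - (∫ ξ : ℝ, f H ξ) = ∫ ξ : ℝ, (f t ξ - f H ξ) :=
      (integral_sub (hf_int t (le_of_lt ht)) (hf_int H le_rfl)).symm
    rw [slope_fun_def]
    simp only [vsub_eq_sub, h1]
    rw [← integral_smul]
  have hF : HasDerivWithinAt (fun t => ∫ ξ : ℝ, f t ξ) D (Set.Ici H) H := by
    rw [hasDerivWithinAt_iff_tendsto_slope, Set.Ici_sdiff_left]
    exact Tendsto.congr' (hslope_eq.mono fun t h => h.symm) hDCT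
  have hFc := hF.const_mul (1 / (2 * (Real.pi : ℂ)))
  have heq : (fun t : ℝ => uRad k H g (x₁, t))
      = fun t => (1 / (2 * (Real.pi : ℂ))) * ∫ ξ : ℝ, f t ξ := by
    funext t
    rw [uRad]
  rw [heq]
  have hI : D = Complex.I * ∫ ξ : ℝ, betaSym k ξ * g ξ * Complex.exp (Complex.I * ξ * x₁) := by
    rw [hDdef, ← integral_const_mul]
    refine integral_congr_ae (Filter.Eventually.of_forall fun ξ => ?_)
    rw [hzdef, hAdef]; ring
  have hfin : (Complex.I / (2 * (Real.pi : ℂ))) *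
      (∫ ξ : ℝ, betaSym k ξ * g ξ * Complex.exp (Complex.I * ξ * x₁))
      = (1 / (2 * (Real.pi : ℂ))) * D := by
    rw [hI]; ring
  rw [hfin]
  exact hFc
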